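/- arXiv:2603.23325 — 8 statements merged into one kernel-verified Lean document; each statement's English description precedes it below -/
import Mathlib

section
/- For any Borel probability measure μ on ℝ, the function κ ↦ pd(μ; 1 - κ) on (0,1) is right-continuous, where pd(μ; 1-κ) is the infimum of diam(I) over Borel sets I ⊆ ℝ with μ(I) ≥ 1 - κ. -/
open MeasureTheory Set Filter
open scoped ENNReal Topology

/-- The `α`-partial diameter of a Borel measure on `ℝ`:
`inf { diam I : I Borel, μ I ≥ α }`. -/
noncomputable def partialDiam (μ : Measure ℝ) (α : ℝ) : ℝ≥0∞ :=
  ⨅ I ∈ {I : Set ℝ | MeasurableSet I ∧ ENNReal.ofReal α ≤ μ I}, EMetric.diam I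

/-!
A set of diameter `< r` lies in a closed interval of length `r`, so `partialDiam μ α ≤ r` as soon
as some interval `[a, a + r]` carries mass `α`. The mass `μ [a, a + r]` is upper semicontinuous
in `a`, and by tightness only the `a` in a compact set matter, so the supremum over `a` of this
mass is attained. Hence if every mass `α' < α` is carried by some `[a, a + r]`, so is `α` itself,
which makes `partialDiam μ` left-continuous.
-/

section

variable (μ : Measure ℝ)

theorem partialDiam_mono : Monotone (partialDiam μ) := fun _ _ hαβ =>
  le_iInf₂ fun I hI => iInf₂_le I ⟨hI.1, (ENNReal.ofReal_le_ofReal hαβ).trans hI.2⟩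

theorem partialDiam_le_of_le_measure_Icc {α a r : ℝ}
    (h : ENNReal.ofReal α ≤ μ (Icc a (a + r))) : partialDiam μ α ≤ ENNReal.ofReal r :=
  (iInf₂_le _ ⟨measurableSet_Icc, h⟩).trans_eq <|
    (Real.ediam_Icc a (a + r)).trans (congrArg _ (add_sub_cancel_left a r))

theorem exists_le_measure_Icc_of_partialDiam_lt {α r : ℝ}
    (h : partialDiam μ α < ENNReal.ofReal r) : ∃ a, ENNReal.ofReal α ≤ μ (Icc a (a + r)) := by
  simp only [partialDiam, iInf_lt_iff] at h
  obtain ⟨I, ⟨-, hμI⟩, hI⟩ := h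
  change Metric.ediam I < _ at hI
  have hbdd : Bornology.IsBounded I := Metric.isBounded_iff_ediam_ne_top.2 hI.ne_top
  rw [Real.ediam_eq hbdd, ENNReal.ofReal_lt_ofReal_iff'] at hI
  refine ⟨sInf I, hμI.trans (measure_mono fun x hx => ?_)⟩
  have hx' := hbdd.subset_Icc_sInf_sSup hx
  exact ⟨hx'.1, by linarith [hx'.2, hI.1]⟩

theorem upperSemicontinuous_measure_Icc [IsFiniteMeasureOnCompacts μ] (r : ℝ) :
    UpperSemicontinuous fun a => μ (Icc a (a + r)) := by
  intro a y hy
  have hlim :=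
    tendsto_measure_cthickening_of_isCompact (μ := μ) (isCompact_Icc (a := a) (b := a + r))
  obtain ⟨δ, hδy, hδ⟩ : ∃ δ, μ (Metric.cthickening δ (Icc a (a + r))) < y ∧ 0 < δ :=
    (((hlim.mono_left (nhdsWithin_le_nhds (s := Ioi 0))).eventually (gt_mem_nhds hy)).and
      self_mem_nhdsWithin).exists
  filter_upwards [Metric.closedBall_mem_nhds a hδ] with a' ha'
  refine lt_of_le_of_lt (measure_mono fun x hx => ?_) hδy
  rw [Metric.mem_closedBall, Real.dist_eq] at ha'
  refine Metric.mem_cthickening_of_dist_le x (x - a' + a) δ _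
    ⟨by linarith [hx.1], by linarith [hx.2]⟩ ?_
  rwa [Real.dist_eq, show x - (x - a' + a) = a' - a by ring]

theorem exists_le_measure_Icc [IsFiniteMeasure μ] (r : ℝ) {γ : ℝ≥0∞} (hγ : 0 < γ)
    (h : ∀ β < γ, ∃ a, β ≤ μ (Icc a (a + r))) : ∃ a, γ ≤ μ (Icc a (a + r)) := by
  obtain ⟨K, hK, hKγ⟩ := exists_isCompact_closure_measure_compl_lt μ γ hγ
  set C := Metric.cthickening r (closure K)
  have mem_C_of_lt : ∀ a, μ Kᶜ < μ (Icc a (a + r)) → a ∈ C := by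
    intro a ha
    by_contra haC
    have hsub : Icc a (a + r) ⊆ Kᶜ := fun x hx hxK => haC <|
      Metric.mem_cthickening_of_dist_le a x r _ (subset_closure hxK) <| by
        rw [Real.dist_eq, abs_le]
        constructor <;> linarith [hx.1, hx.2]
    exact (measure_mono hsub).not_gt ha
  obtain ⟨β₀, hKβ₀, hβ₀γ⟩ := exists_between hKγ
  obtain ⟨a₀, ha₀⟩ := h β₀ hβ₀γ
  obtain ⟨a, -, hmax⟩ := UpperSemicontinuousOn.exists_isMaxOn
    ⟨a₀, mem_C_of_lt a₀ (hKβ₀.trans_le ha₀)⟩ (hK.cthickening (r := r))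
    ((upperSemicontinuous_measure_Icc μ r).upperSemicontinuousOn C)
  refine ⟨a, le_of_forall_lt_imp_le_of_dense fun β hβ => ?_⟩
  obtain ⟨b, hb⟩ := h (max β β₀) (max_lt hβ hβ₀γ)
  have hbC : b ∈ C := mem_C_of_lt b (hKβ₀.trans_le ((le_max_right _ _).trans hb))
  exact (le_max_left _ _).trans (hb.trans (hmax hbC))

theorem partialDiam_le_sSup_image_Iio [IsFiniteMeasure μ] {α : ℝ} (hα : 0 < α) :
    partialDiam μ α ≤ sSup (partialDiam μ '' Iio α) := by
  refine le_of_forall_gt_imp_ge_of_dense fun d hd => ?_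
  rcases eq_or_ne d ⊤ with rfl | hd_top
  · exact le_top
  rw [← ENNReal.ofReal_toReal hd_top] at hd ⊢
  obtain ⟨a, ha⟩ := exists_le_measure_Icc μ d.toReal (ENNReal.ofReal_pos.2 hα) fun β hβ => by
    obtain ⟨α', -, hβα', hα'α⟩ := ENNReal.lt_iff_exists_real_btwn.1 hβ
    have hα'_lt : α' ∈ Iio α := (ENNReal.ofReal_lt_ofReal_iff hα).1 hα'α
    obtain ⟨a, ha⟩ := exists_le_measure_Icc_of_partialDiam_lt μ
      ((le_sSup (mem_image_of_mem _ hα'_lt)).trans_lt hd)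
    exact ⟨a, hβα'.le.trans ha⟩
  exact partialDiam_le_of_le_measure_Icc μ ha

theorem tendsto_partialDiam_nhdsLT [IsFiniteMeasure μ] {α : ℝ} (hα : 0 < α) :
    Tendsto (partialDiam μ) (𝓝[<] α) (𝓝 (partialDiam μ α)) := by
  convert (partialDiam_mono μ).tendsto_nhdsLT α using 2
  refine le_antisymm (partialDiam_le_sSup_image_Iio μ hα) (sSup_le ?_)
  rintro _ ⟨α', hα', rfl⟩
  exact partialDiam_mono μ hα'.le

end

theorem partialDiam_right_continuous (μ : Measure ℝ) [IsProbabilityMeasure μ]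
    (κ : ℝ) (hκ : κ ∈ Set.Ioo (0 : ℝ) 1) :
    Tendsto (fun κ' : ℝ => partialDiam μ (1 - κ')) (𝓝[>] κ)
      (𝓝 (partialDiam μ (1 - κ))) := by
  have h_reflect : Tendsto (fun κ' : ℝ => 1 - κ') (𝓝[>] κ) (𝓝[<] (1 - κ)) :=
    tendsto_nhdsWithin_iff.2
      ⟨((continuous_const.sub continuous_id).tendsto' κ _ rfl).mono_left nhdsWithin_le_nhds,
        eventually_mem_nhdsWithin.mono fun _ (hκ' : κ < _) => sub_lt_sub_left hκ' 1⟩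
  exact (tendsto_partialDiam_nhdsLT μ (sub_pos.2 hκ.2)).comp h_reflect
end

section
/- Let μ be a Borel probability measure on ℝ with Lévy mean 0, let κ ∈ (0, 1/2), and let R > 0. If pd((b_R)_* μ; 1 - κ) < R, where b_R(t) := max(-R, min(t, R)), then pd(μ; 1 - κ) = pd((b_R)_* μ; 1 - κ). -/
open MeasureTheory Set
open scoped ENNReal

/-- The Lévy mean `Lm(μ) = inf { m : μ((-∞, m]) ≥ 1/2 }`. -/
noncomputable def levyMean (μ : Measure ℝ) : ℝ :=
  sInf {m : ℝ | ENNReal.ofReal (1 / 2) ≤ μ (Set.Iic m)}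

/-- The clipping function `b_R(t) = max (-R) (min t R)`. -/
def clip (R t : ℝ) : ℝ := max (-R) (min t R)

/-!
Clipping is monotone and 1-Lipschitz, so it maps every interval onto an interval that is no
longer and carries at least the same mass; hence clipping can only decrease the partial diameter.
Conversely, the Lévy mean `0` is a median, of the clipped measure too, so an interval `[a, b]`
nearly optimal for the clipped measure, having mass `1 - κ > 1/2`, contains `0`; being shorter
than `R`, it satisfies `-R < a ≤ 0 ≤ b < R`, and on such an interval clipping changes nothing,
so `[a, b]` has the same mass for `μ`.
-/

open ProbabilityTheory

def IsMedian (μ : Measure ℝ) (m : ℝ) : Prop :=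
  ENNReal.ofReal (1 / 2) ≤ μ (Iic m) ∧ ENNReal.ofReal (1 / 2) ≤ μ (Ici m)

theorem isMedian_levyMean (μ : Measure ℝ) [IsProbabilityMeasure μ] :
    IsMedian μ (levyMean μ) := by
  set F := cdf μ
  set S := {m : ℝ | 1 / 2 ≤ F m}
  have hlevy : levyMean μ = sInf S := by
    simp only [levyMean, S, F, ← ofReal_cdf, ENNReal.ofReal_le_ofReal_iff (cdf_nonneg μ _)]
  have hne : S.Nonempty :=
    ((tendsto_cdf_atTop μ).eventually (eventually_ge_nhds (by norm_num))).exists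
  obtain ⟨x₀, hx₀⟩ :=
    ((tendsto_cdf_atBot μ).eventually (eventually_lt_nhds (by norm_num : (0 : ℝ) < 1 / 2))).exists
  have hbdd : BddBelow S :=
    ⟨x₀, fun m hm => le_of_not_gt fun h => (hm.trans (F.mono h.le)).not_gt hx₀⟩
  have hright : 1 / 2 ≤ F (levyMean μ) := by
    refine ge_of_tendsto ((F.right_continuous _).mono Ioi_subset_Ici_self)
      (eventually_nhdsWithin_of_forall fun x hx => ?_)
    obtain ⟨y, hyS, hyx⟩ := exists_lt_of_csInf_lt hne (hlevy ▸ hx)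
    exact hyS.trans (F.mono hyx.le)
  have hleft : Function.leftLim F (levyMean μ) ≤ 1 / 2 := by
    refine le_of_tendsto (F.mono.tendsto_leftLim _)
      (eventually_nhdsWithin_of_forall fun x hx => le_of_lt (not_le.1 fun hxS => ?_))
    exact (csInf_le hbdd hxS).not_gt (hlevy ▸ hx)
  constructor
  · rw [← ofReal_cdf]
    exact ENNReal.ofReal_le_ofReal hright
  · have hIci := F.measure_Ici (tendsto_cdf_atTop μ) (levyMean μ)
    rw [measure_cdf] at hIci
    exact hIci ▸ ENNReal.ofReal_le_ofReal (by linarith)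

theorem IsMedian.map {μ : Measure ℝ} {m : ℝ} (h : IsMedian μ m) {f : ℝ → ℝ} (hf : Monotone f) :
    IsMedian (μ.map f) (f m) := by
  simp only [IsMedian, Measure.map_apply hf.measurable measurableSet_Iic,
    Measure.map_apply hf.measurable measurableSet_Ici]
  exact ⟨h.1.trans (measure_mono fun _ ht => hf ht), h.2.trans (measure_mono fun _ ht => hf ht)⟩

theorem IsMedian.mem_Icc {μ : Measure ℝ} [IsProbabilityMeasure μ] {m a b : ℝ} (h : IsMedian μ m)
    (hab : ENNReal.ofReal (1 / 2) < μ (Icc a b)) : m ∈ Icc a b := by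
  have hhalf : μ univ = ENNReal.ofReal (1 / 2) + ENNReal.ofReal (1 / 2) := by
    rw [measure_univ, ← ENNReal.ofReal_add] <;> norm_num
  obtain ⟨x, hxab, hxm⟩ := nonempty_inter_of_measure_lt_add μ measurableSet_Iic (subset_univ _)
    (subset_univ _) (hhalf.trans_lt (ENNReal.add_lt_add_of_lt_of_le ENNReal.ofReal_ne_top hab h.1))
  obtain ⟨y, hyab, hym⟩ := nonempty_inter_of_measure_lt_add μ measurableSet_Ici (subset_univ _)
    (subset_univ _) (hhalf.trans_lt (ENNReal.add_lt_add_of_lt_of_le ENNReal.ofReal_ne_top hab h.2))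
  exact ⟨hxab.1.trans hxm, hym.trans hyab.2⟩

theorem partialDiam_le_ofReal_of_le_measure_Icc {μ : Measure ℝ} {α a b : ℝ}
    (h : ENNReal.ofReal α ≤ μ (Icc a b)) : partialDiam μ α ≤ ENNReal.ofReal (b - a) :=
  (iInf₂_le (Icc a b) ⟨measurableSet_Icc, h⟩).trans_eq (Real.ediam_Icc a b)

/-- Every set of reals lies in an interval of the same diameter, its hull `[sInf I, sSup I]`. -/
theorem le_partialDiam_of_forall_Icc {μ : Measure ℝ} {α : ℝ} {c : ℝ≥0∞}
    (h : ∀ a b, ENNReal.ofReal α ≤ μ (Icc a b) → c ≤ ENNReal.ofReal (b - a)) :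
    c ≤ partialDiam μ α := by
  refine le_iInf₂ fun I ⟨_, hI⟩ => ?_
  by_cases hbdd : Bornology.IsBounded I
  · rw [EMetric.diam, Real.ediam_eq hbdd]
    exact h _ _ (hI.trans (measure_mono hbdd.subset_Icc_sInf_sSup))
  · rw [EMetric.diam, Metric.ediam_eq_top_iff_unbounded.2 hbdd]
    exact le_top

theorem exists_Icc_of_partialDiam_lt {μ : Measure ℝ} {α : ℝ} {c : ℝ≥0∞}
    (h : partialDiam μ α < c) :
    ∃ a b, ENNReal.ofReal α ≤ μ (Icc a b) ∧ ENNReal.ofReal (b - a) < c := by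
  by_contra! hc
  exact (le_partialDiam_of_forall_Icc hc).not_gt h

theorem partialDiam_map_le {f : ℝ → ℝ} (hf : Monotone f) (hf₁ : LipschitzWith 1 f)
    (μ : Measure ℝ) (α : ℝ) : partialDiam (μ.map f) α ≤ partialDiam μ α := by
  refine le_partialDiam_of_forall_Icc fun a b hab => ?_
  refine (partialDiam_le_ofReal_of_le_measure_Icc (a := f a) (b := f b) ?_).trans ?_
  · rw [Measure.map_apply hf.measurable measurableSet_Icc]
    exact hab.trans (measure_mono fun _ ht => ⟨hf ht.1, hf ht.2⟩)
  · rcases le_total a b with hle | hle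
    · refine ENNReal.ofReal_le_ofReal ?_
      have := hf₁.dist_le_mul b a
      rw [NNReal.coe_one, one_mul, Real.dist_eq, Real.dist_eq,
        abs_of_nonneg (sub_nonneg.2 hle)] at this
      exact (le_abs_self _).trans this
    · rw [ENNReal.ofReal_of_nonpos (sub_nonpos.2 (hf hle))]
      exact bot_le

theorem monotone_clip (R : ℝ) : Monotone (clip R) :=
  fun _ _ h => max_le_max le_rfl (min_le_min h le_rfl)

theorem lipschitzWith_clip (R : ℝ) : LipschitzWith 1 (clip R) :=
  (LipschitzWith.id.min_const R).const_max (-R)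

theorem clip_zero {R : ℝ} (hR : 0 ≤ R) : clip R 0 = 0 := by
  simp [clip, hR]

theorem clip_preimage_Icc {R a b : ℝ} (ha : -R < a) (hb : b < R) :
    clip R ⁻¹' Icc a b = Icc a b := by
  ext t
  simp only [clip, mem_preimage, mem_Icc]
  grind

theorem partialDiam_le_partialDiam_map_clip {μ : Measure ℝ} [IsProbabilityMeasure μ] {α R : ℝ}
    (hμ : IsMedian μ 0) (hα : ENNReal.ofReal (1 / 2) < ENNReal.ofReal α)
    (h : partialDiam (μ.map (clip R)) α < ENNReal.ofReal R) :
    partialDiam μ α ≤ partialDiam (μ.map (clip R)) α := by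
  have : IsProbabilityMeasure (μ.map (clip R)) :=
    Measure.isProbabilityMeasure_map (monotone_clip R).measurable.aemeasurable
  refine le_of_forall_gt fun c hc => ?_
  obtain ⟨a, b, hab, hlt⟩ := exists_Icc_of_partialDiam_lt (lt_min hc h)
  obtain ⟨hbaR, hR⟩ := ENNReal.ofReal_lt_ofReal_iff'.1 (hlt.trans_le (min_le_right _ _))
  have hν : IsMedian (μ.map (clip R)) 0 := clip_zero hR.le ▸ hμ.map (monotone_clip R)
  have h0 : (0 : ℝ) ∈ Icc a b := hν.mem_Icc (hα.trans_le hab)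
  have hpre : clip R ⁻¹' Icc a b = Icc a b :=
    clip_preimage_Icc (by linarith [h0.2]) (by linarith [h0.1])
  rw [Measure.map_apply (monotone_clip R).measurable measurableSet_Icc, hpre] at hab
  exact (partialDiam_le_ofReal_of_le_measure_Icc hab).trans_lt (hlt.trans_le (min_le_left _ _))

theorem partialDiam_clip_eq_general (μ : Measure ℝ) [IsProbabilityMeasure μ]
    (hLm : levyMean μ = 0) (κ R : ℝ) (hκ : κ ∈ Set.Ioo (0 : ℝ) (1 / 2))
    (h : partialDiam (μ.map (clip R)) (1 - κ) < ENNReal.ofReal R) :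
    partialDiam μ (1 - κ) = partialDiam (μ.map (clip R)) (1 - κ) := by
  have hμ : IsMedian μ 0 := hLm ▸ isMedian_levyMean μ
  have hα : ENNReal.ofReal (1 / 2) < ENNReal.ofReal (1 - κ) :=
    (ENNReal.ofReal_lt_ofReal_iff (by linarith [hκ.2])).2 (by linarith [hκ.2])
  exact le_antisymm (partialDiam_le_partialDiam_map_clip hμ hα h)
    (partialDiam_map_le (monotone_clip R) (lipschitzWith_clip R) μ _)

theorem partialDiam_clip_eq (μ : Measure ℝ) [IsProbabilityMeasure μ]
    (hLm : levyMean μ = 0) (κ R : ℝ) (hκ : κ ∈ Set.Ioo (0 : ℝ) (1 / 2)) (hR : 0 < R)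
    (h : partialDiam (μ.map (clip R)) (1 - κ) < ENNReal.ofReal R) :
    partialDiam μ (1 - κ) = partialDiam (μ.map (clip R)) (1 - κ) :=
  partialDiam_clip_eq_general μ hLm κ R hκ h
end

section
/- Let X be a metric space, μ a Borel probability measure on X, and S_n, S closed subsets of X for n = 1, 2, …. If S_n converges to S in the weak Hausdorff sense, then μ(S) ≥ limsup_{n→∞} μ(S_n). -/
open MeasureTheory Set Filter
open scoped ENNReal Topology

/-- Weak Hausdorff convergence of a sequence of closed sets to a closed set:
(1) points of the limit are approximated by the sets, and
(2) points outside the limit stay uniformly away eventually. -/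
def WeakHausdorffTendsto {X : Type*} [MetricSpace X] (S : ℕ → Set X) (T : Set X) : Prop :=
  (∀ x ∈ T, Tendsto (fun n => Metric.infDist x (S n)) atTop (𝓝 0)) ∧
  (∀ x ∉ T, 0 < liminf (fun n => Metric.infDist x (S n)) atTop)

theorem measure_limit_ge_limsup_of_weakHausdorff {X : Type*} [MetricSpace X]
    [MeasurableSpace X] [BorelSpace X]
    (μ : Measure X) [IsProbabilityMeasure μ]
    (S : ℕ → Set X) (T : Set X)
    (hS : ∀ n, IsClosed (S n)) (hT : IsClosed T)
    (h : WeakHausdorffTendsto S T) :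
    limsup (fun n => μ (S n)) atTop ≤ μ T := by
  -- limsup of the sets is contained in T
  have hsub : limsup S atTop ⊆ T := by
    intro x hx
    by_contra hxT
    have hpos := h.2 x hxT
    have hfreq : ∃ᶠ n in atTop, x ∈ S n := mem_limsup_iff_frequently_mem.mp hx
    have hle : liminf (fun n => Metric.infDist x (S n)) atTop ≤ 0 := by
      apply liminf_le_of_frequently_le
      · exact hfreq.mono fun n hn => le_of_eq (Metric.infDist_zero_of_mem hn)
      · exact isBoundedUnder_of ⟨0, fun n => Metric.infDist_nonneg⟩
    exact absurd (lt_of_lt_of_le hpos hle) (lt_irrefl 0)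
  refine le_trans ?_ (measure_mono hsub)
  -- reverse Fatou for sets with a finite measure
  set A : ℕ → Set X := fun n => ⋃ i ∈ Ici n, S i with hA
  have hAm : ∀ n, NullMeasurableSet (A n) μ :=
    fun n => (MeasurableSet.biUnion (to_countable _)
      fun i _ => (hS i).measurableSet).nullMeasurableSet
  have hAanti : Antitone A := fun m n hmn =>
    biUnion_subset_biUnion_left (Ici_subset_Ici.2 hmn)
  have hlimsup_eq : limsup S atTop = ⋂ n, A n := by
    rw [limsup_eq_iInf_iSup_of_nat]
    simp only [hA, iSup_eq_iUnion, iInf_eq_iInter, mem_Ici]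
  rw [hlimsup_eq, hAanti.measure_iInter hAm ⟨0, measure_ne_top μ _⟩]
  refine le_iInf fun n => ?_
  calc limsup (fun k => μ (S k)) atTop
      ≤ μ (A n) := by
        refine limsup_le_of_le (by isBoundedDefault) ?_
        filter_upwards [eventually_ge_atTop n] with k hk
        exact measure_mono (subset_biUnion_of_mem hk)
end

section
/- Suppose that for every α ∈ (0,1), R > 0 and Borel probability measure μ on ℝ there exists g ∈ Lip₁(ℝ) with values in [-R/α, R/α] such that pd(g_* μ; α) = min{R, pd(μ; α)}. Then the family Lip₁(ℝ) is extractable on (0,1) with extraction estimate φ(κ, r) := r/(1-κ); that is, for any κ ∈ (0,1), ε, r > 0, and Borel probability measure μ on ℝ, there exists g ∈ Lip₁(ℝ) such that min{r, pd(μ; 1-(κ+ε))} ≤ pd((b_{φ(κ,r)})_* g_* μ; 1-κ) + 2ε, where b_R is clipping to [-R, R]. -/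
open MeasureTheory Set
open scoped ENNReal

theorem lip1_extractable
    (hyp : ∀ α R : ℝ, α ∈ Set.Ioo (0 : ℝ) 1 → 0 < R →
      ∀ μ : Measure ℝ, IsProbabilityMeasure μ →
        ∃ g : ℝ → ℝ, LipschitzWith 1 g ∧ (∀ t, g t ∈ Set.Icc (-(R / α)) (R / α)) ∧
          partialDiam (μ.map g) α = min (ENNReal.ofReal R) (partialDiam μ α)) :
    ∀ κ ε r : ℝ, κ ∈ Set.Ioo (0 : ℝ) 1 → 0 < ε → κ + ε < 1 → 0 < r →
      ∀ μ : Measure ℝ, IsProbabilityMeasure μ →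
        ∃ g : ℝ → ℝ, LipschitzWith 1 g ∧
          min (ENNReal.ofReal r) (partialDiam μ (1 - (κ + ε))) ≤
            partialDiam ((μ.map g).map (clip (r / (1 - κ)))) (1 - κ) +
              ENNReal.ofReal (2 * ε) := by
  intro κ ε r hκ hε hκε hr μ hμ
  have hκ1 : (0:ℝ) < 1 - κ := by linarith [hκ.2]
  obtain ⟨g, hg, hgb, hgd⟩ := hyp (1 - κ) r ⟨hκ1, by linarith [hκ.1]⟩ hr μ hμ
  refine ⟨g, hg, ?_⟩
  have hmeas : Measurable g := hg.continuous.measurable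
  have hclip : Measurable (clip (r / (1 - κ))) := by
    unfold clip; fun_prop
  have hmap : (μ.map g).map (clip (r / (1 - κ))) = μ.map g := by
    rw [Measure.map_map hclip hmeas]
    congr 1
    funext t
    obtain ⟨h1, h2⟩ := hgb t
    simp only [Function.comp_apply, clip]
    rw [min_eq_left h2, max_eq_right h1]
  rw [hmap, hgd]
  have hmono : partialDiam μ (1 - (κ + ε)) ≤ partialDiam μ (1 - κ) := by
    refine le_iInf₂ fun I hI => iInf₂_le I ?_
    exact ⟨hI.1, le_trans (ENNReal.ofReal_le_ofReal (by linarith)) hI.2⟩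
  calc min (ENNReal.ofReal r) (partialDiam μ (1 - (κ + ε)))
      ≤ min (ENNReal.ofReal r) (partialDiam μ (1 - κ)) := min_le_min le_rfl hmono
    _ ≤ _ := le_self_add
end

section
/- Let X be a compact metric space and μ a Borel probability measure on X, and let Y be a metric space. The map (f, g) ↦ sup_{x ∈ K} d_Y(f(x), g(x)) restricted to pairs of 1-Lipschitz maps X → Y is uniformly continuous with respect to the sup of Ky Fan metrics: for every ε > 0 and compact K ⊆ X with μ(K) > 0, there exists δ > 0 such that for all 1-Lipschitz f, f', g, g' : X → Y with d_KF(f, f') < δ and d_KF(g, g') < δ, one has |sup_{x∈K} d_Y(f(x),g(x)) - sup_{x∈K} d_Y(f'(x),g'(x))| < ε. -/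
open MeasureTheory Set
open scoped ENNReal

/-- The Ky Fan (extended) distance between two maps into a pseudo-emetric space. -/
noncomputable def eKyFan {X Y : Type*} [MeasurableSpace X] [PseudoEMetricSpace Y]
    (μ : Measure X) (f g : X → Y) : ℝ≥0∞ :=
  sInf {ε : ℝ≥0∞ | μ {x | ε < edist (f x) (g x)} ≤ ε}

/-- On a compact space with a full-support measure, balls of a fixed radius have a uniform
positive measure lower bound. -/
lemma exists_uniform_ball_measure_lb {X : Type*} [MetricSpace X] [CompactSpace X]
    [MeasurableSpace X] (μ : Measure X)
    (hsupp : ∀ U : Set X, IsOpen U → U.Nonempty → 0 < μ U)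
    (r : ℝ) (hr : 0 < r) :
    ∃ m : ℝ≥0∞, 0 < m ∧ ∀ x : X, m ≤ μ (Metric.ball x r) := by
  obtain ⟨t, ht⟩ := isCompact_univ.elim_finite_subcover
    (fun x : X => Metric.ball x (r/2)) (fun x => Metric.isOpen_ball)
    (fun x _ => mem_iUnion.2 ⟨x, Metric.mem_ball_self (by linarith)⟩)
  rcases t.eq_empty_or_nonempty with rfl | hne
  · refine ⟨1, one_pos, fun x => absurd (ht (mem_univ x)) (by simp)⟩
  · refine ⟨t.inf' hne (fun i => μ (Metric.ball i (r/2))), ?_, ?_⟩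
    · rw [Finset.lt_inf'_iff]
      exact fun i _ => hsupp _ Metric.isOpen_ball ⟨i, Metric.mem_ball_self (by linarith)⟩
    · intro x
      obtain ⟨i, hi, hxi⟩ := by simpa using ht (mem_univ x)
      calc t.inf' hne (fun i => μ (Metric.ball i (r/2))) ≤ μ (Metric.ball i (r/2)) :=
            Finset.inf'_le _ hi
        _ ≤ μ (Metric.ball x r) := by
            apply measure_mono
            intro y hy
            have := Metric.mem_ball.1 hy
            have := Metric.mem_ball.1 hxi
            rw [Metric.mem_ball]
            calc dist y x ≤ dist y i + dist i x := dist_triangle _ _ _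
              _ < r/2 + r/2 := by rw [dist_comm i x]; exact add_lt_add ‹_› ‹_›
              _ = r := by ring

/-- If two 1-Lipschitz maps have small Ky Fan distance (relative to a uniform ball-measure
bound), they are uniformly close. -/
lemma dist_le_of_eKyFan_lt {X Y : Type*} [MetricSpace X] [MetricSpace Y] [MeasurableSpace X]
    (μ : Measure X) (c : ℝ) (hc : 0 < c) (m : ℝ≥0∞)
    (hball : ∀ x : X, m ≤ μ (Metric.ball x (c/4)))
    (f f' : X → Y) (hf : LipschitzWith 1 f) (hf' : LipschitzWith 1 f')
    (hKF : eKyFan μ f f' < min m (ENNReal.ofReal (c/2))) :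
    ∀ x, dist (f x) (f' x) ≤ c := by
  by_contra h
  push_neg at h
  obtain ⟨x₀, hx₀⟩ := h
  obtain ⟨ε', hε'mem, hε'lt⟩ := sInf_lt_iff.1 hKF
  have hsub : Metric.ball x₀ (c/4) ⊆ {x | ε' < edist (f x) (f' x)} := by
    intro x hx
    have hxd : dist x x₀ < c/4 := Metric.mem_ball.1 hx
    have h1 : dist (f x) (f x₀) ≤ dist x x₀ := by
      simpa using hf.dist_le_mul x x₀
    have h2 : dist (f' x₀) (f' x) ≤ dist x₀ x := by
      simpa using hf'.dist_le_mul x₀ x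
    have hd : c/2 < dist (f x) (f' x) := by
      have h3 := dist_triangle4 (f x₀) (f x) (f' x) (f' x₀)
      rw [dist_comm (f x₀) (f x)] at h3
      rw [dist_comm (f' x₀) (f' x), dist_comm x₀ x] at h2
      linarith
    show ε' < edist (f x) (f' x)
    calc ε' < ENNReal.ofReal (c/2) := hε'lt.trans_le (min_le_right _ _)
      _ < ENNReal.ofReal (dist (f x) (f' x)) :=
          (ENNReal.ofReal_lt_ofReal_iff (lt_trans (by linarith) hd)).2 hd
      _ = edist (f x) (f' x) := (edist_dist _ _).symm
  have : m ≤ ε' := le_trans (le_trans (hball x₀) (measure_mono hsub)) hε'mem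
  exact absurd (this.trans_lt (hε'lt.trans_le (min_le_left _ _))) (lt_irrefl m)

theorem supDist_uniformly_continuous_on_lipschitz {X Y : Type*}
    [MetricSpace X] [CompactSpace X] [MeasurableSpace X] [BorelSpace X]
    [MetricSpace Y]
    (μ : Measure X) [IsProbabilityMeasure μ]
    (hsupp : ∀ U : Set X, IsOpen U → U.Nonempty → 0 < μ U)
    (ε : ℝ) (hε : 0 < ε) (K : Set X) (hK : IsCompact K) (hKpos : 0 < μ K) :
    ∃ δ > 0, ∀ f f' g g' : X → Y,
      LipschitzWith 1 f → LipschitzWith 1 f' → LipschitzWith 1 g → LipschitzWith 1 g' →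
      eKyFan μ f f' < ENNReal.ofReal δ → eKyFan μ g g' < ENNReal.ofReal δ →
      |sSup ((fun x => dist (f x) (g x)) '' K) -
        sSup ((fun x => dist (f' x) (g' x)) '' K)| < ε := by
  have hKne : K.Nonempty := nonempty_of_measure_ne_zero hKpos.ne'
  set c : ℝ := ε/4 with hc
  have hcpos : 0 < c := by positivity
  obtain ⟨m, hm, hball⟩ := exists_uniform_ball_measure_lb μ hsupp (c/4) (by positivity)
  have hmtop : m ≠ ⊤ := by
    obtain ⟨x₀, _⟩ := hKne
    exact ((hball x₀).trans_lt ((prob_le_one).trans_lt (by norm_num))).ne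
  refine ⟨min m.toReal (c/2), lt_min (ENNReal.toReal_pos hm.ne' hmtop) (by positivity), ?_⟩
  intro f f' g g' hf hf' hg hg' hff' hgg'
  have hδle : ENNReal.ofReal (min m.toReal (c/2)) ≤ min m (ENNReal.ofReal (c/2)) := by
    refine le_min ?_ (ENNReal.ofReal_le_ofReal (min_le_right _ _))
    exact ENNReal.ofReal_le_of_le_toReal (min_le_left _ _)
  have hfclose : ∀ x, dist (f x) (f' x) ≤ c :=
    dist_le_of_eKyFan_lt μ c hcpos m hball f f' hf hf' (hff'.trans_le hδle)
  have hgclose : ∀ x, dist (g x) (g' x) ≤ c :=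
    dist_le_of_eKyFan_lt μ c hcpos m hball g g' hg hg' (hgg'.trans_le hδle)
  -- sup comparison
  have key : ∀ (u u' v v' : X → Y), Continuous u' → Continuous v' →
      (∀ x, dist (u x) (u' x) ≤ c) → (∀ x, dist (v x) (v' x) ≤ c) →
      sSup ((fun x => dist (u x) (v x)) '' K) ≤
        sSup ((fun x => dist (u' x) (v' x)) '' K) + ε/2 := by
    intro u u' v v' hu' hv' huc hvc
    have hbdd : BddAbove ((fun x => dist (u' x) (v' x)) '' K) :=
      (hK.image (hu'.dist hv')).bddAbove
    refine csSup_le (hKne.image _) ?_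
    rintro a ⟨x, hx, rfl⟩
    have h4 := dist_triangle4 (u x) (u' x) (v' x) (v x)
    have hle : dist (u' x) (v' x) ≤ sSup ((fun x => dist (u' x) (v' x)) '' K) :=
      le_csSup hbdd ⟨x, hx, rfl⟩
    have hvx : dist (v' x) (v x) ≤ c := by rw [dist_comm]; exact hvc x
    have : dist (u x) (v x) ≤ dist (u' x) (v' x) + ε/2 := by
      have := huc x
      rw [hc] at *
      linarith
    linarith
  have h1 := key f f' g g' hf'.continuous hg'.continuous hfclose hgclose
  have h2 := key f' f g' g hf.continuous hg.continuous
    (fun x => by rw [dist_comm]; exact hfclose x)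
    (fun x => by rw [dist_comm]; exact hgclose x)
  rw [abs_sub_lt_iff]
  constructor <;> linarith
end

section
/- Let (X, d, μ) be a complete separable metric space equipped with a fully supported Borel probability measure, and let F ⊆ Lip₁(X, ℝ). Let F̄ denote the closure of F in the topology of convergence in measure. Then for any f ∈ F̄ and r ∈ (0, 1), the set F̄ ∩ { g : d_KF(f, g) ≤ r } is compact in the topology of convergence in measure. In particular, (F̄, d_KF) is complete. -/
open MeasureTheory Set Filter
open scoped ENNReal Topology

/-- The closure of a family of functions in the topology of convergence in
measure (equivalently, with respect to the Ky Fan metric). -/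
def closKF {X : Type*} [MeasurableSpace X] (μ : Measure X)
    (F : Set (X → ℝ)) : Set (X → ℝ) :=
  {g | ∀ ε : ℝ≥0∞, 0 < ε → ∃ f ∈ F, eKyFan μ f g < ε}

/-!
Every element of the Ky Fan closure of a family of 1-Lipschitz functions has a 1-Lipschitz
representative: some sequence from the family converges to it almost everywhere, hence on a dense
set since `μ` charges every open set, hence everywhere by equicontinuity.

If `g` lies within Ky Fan distance `< c < 1` of `f`, then inside a ball `B(x₀, R)` of measure
`> c` there is a point where `|f - g| ≤ 1`, so `|g x₀ - f x₀| ≤ 2R + 1`. A sequence in the ball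
is therefore bounded at `x₀`, and an Arzelà–Ascoli diagonal argument on a dense sequence yields a
pointwise convergent subsequence; on a probability space pointwise convergence implies convergence
in measure. A Cauchy sequence has a tail inside such a ball, which gives completeness.
-/

open Metric
open scoped NNReal

section KyFan

variable {X Y : Type*} [MeasurableSpace X] [PseudoEMetricSpace Y] {μ : Measure X}

lemma eKyFan_le_of_measure_le {f g : X → Y} {ε : ℝ≥0∞}
    (h : μ {x | ε < edist (f x) (g x)} ≤ ε) : eKyFan μ f g ≤ ε :=
  sInf_le h

lemma measure_le_of_eKyFan_lt {f g : X → Y} {ε : ℝ≥0∞} (h : eKyFan μ f g < ε) :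
    μ {x | ε < edist (f x) (g x)} ≤ ε := by
  obtain ⟨a, ha, haε⟩ := sInf_lt_iff.mp h
  calc μ {x | ε < edist (f x) (g x)} ≤ μ {x | a < edist (f x) (g x)} :=
        measure_mono fun x hx => haε.trans hx
    _ ≤ ε := ha.trans haε.le

lemma eKyFan_congr {f f' g g' : X → Y} (hf : f =ᵐ[μ] f') (hg : g =ᵐ[μ] g') :
    eKyFan μ f g = eKyFan μ f' g' := by
  unfold eKyFan
  congr 1
  ext ε
  suffices {x | ε < edist (f x) (g x)} =ᵐ[μ] {x | ε < edist (f' x) (g' x)} by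
    simp only [mem_ofPred_eq, measure_congr this]
  filter_upwards [hf, hg] with x hfx hgx
  change (ε < edist (f x) (g x)) = (ε < edist (f' x) (g' x))
  rw [hfx, hgx]

lemma eKyFan_triangle (f g h : X → Y) : eKyFan μ f h ≤ eKyFan μ f g + eKyFan μ g h := by
  conv_rhs => simp only [eKyFan]
  rw [ENNReal.sInf_add]
  refine le_iInf₂ fun a ha => ?_
  rw [ENNReal.add_sInf]
  refine le_iInf₂ fun b hb => eKyFan_le_of_measure_le ?_
  have hsub : {x | a + b < edist (f x) (h x)} ⊆
      {x | a < edist (f x) (g x)} ∪ {x | b < edist (g x) (h x)} := fun x hx => by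
    by_contra hc
    simp only [mem_union, mem_ofPred_eq, not_or, not_lt] at hc
    exact hx.not_ge ((edist_triangle _ _ _).trans (add_le_add hc.1 hc.2))
  calc μ {x | a + b < edist (f x) (h x)} ≤ _ := measure_mono hsub
    _ ≤ _ := measure_union_le _ _
    _ ≤ a + b := add_le_add ha hb

lemma tendsto_eKyFan_zero_iff_tendstoInMeasure {ι : Type*} {l : Filter ι} {f : ι → X → Y}
    {g : X → Y} :
    Tendsto (fun i => eKyFan μ (f i) g) l (𝓝 0) ↔ TendstoInMeasure μ f l g := by
  constructor
  · intro h
    refine tendstoInMeasure_of_ne_top fun ε hε hε_top => ENNReal.tendsto_nhds_zero.2 fun δ hδ => ?_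
    set δ' := min δ (ε / 2)
    have hδ'ε : δ' < ε := (min_le_right _ _).trans_lt (ENNReal.half_lt_self hε.ne' hε_top)
    have hδ' : 0 < δ' := lt_min hδ (ENNReal.half_pos hε.ne')
    filter_upwards [h.eventually (eventually_lt_nhds hδ')] with i hi
    calc μ {x | ε ≤ edist (f i x) (g x)} ≤ μ {x | δ' < edist (f i x) (g x)} :=
          measure_mono fun x hx => hδ'ε.trans_le hx
      _ ≤ δ' := measure_le_of_eKyFan_lt hi
      _ ≤ δ := min_le_left _ _
  · intro h
    refine ENNReal.tendsto_nhds_zero.2 fun δ hδ => ?_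
    filter_upwards [(h δ hδ).eventually (eventually_le_nhds hδ)] with i hi
    exact eKyFan_le_of_measure_le
      ((measure_mono (ofPred_subset_ofPred.2 fun x hx => le_of_lt hx)).trans hi)

lemma eKyFan_le_of_tendsto {ι : Type*} {l : Filter ι} [l.NeBot] {f h : X → Y} {g : ι → X → Y}
    {r : ℝ≥0∞} (hle : ∀ i, eKyFan μ f (g i) ≤ r)
    (hlim : Tendsto (fun i => eKyFan μ (g i) h) l (𝓝 0)) : eKyFan μ f h ≤ r := by
  have : Tendsto (fun i => r + eKyFan μ (g i) h) l (𝓝 r) := by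
    simpa using tendsto_const_nhds.add hlim
  exact ge_of_tendsto' this fun i =>
    (eKyFan_triangle f (g i) h).trans (add_le_add_left (hle i) _)

lemma tendsto_eKyFan_of_cauchy_of_tendsto_subseq {g : ℕ → X → Y} {h : X → Y} {φ : ℕ → ℕ}
    (hcauchy : ∀ ε : ℝ≥0∞, 0 < ε → ∃ N : ℕ, ∀ m ≥ N, ∀ n ≥ N, eKyFan μ (g m) (g n) < ε)
    (hφ : StrictMono φ) (hsub : Tendsto (fun n => eKyFan μ (g (φ n)) h) atTop (𝓝 0)) :
    Tendsto (fun n => eKyFan μ (g n) h) atTop (𝓝 0) := by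
  refine ENNReal.tendsto_nhds_zero.2 fun ε hε => ?_
  have hε2 := ENNReal.half_pos hε.ne'
  obtain ⟨N, hN⟩ := hcauchy _ hε2
  obtain ⟨k, hk, hNk⟩ :=
    ((hsub.eventually (eventually_lt_nhds hε2)).and (eventually_ge_atTop N)).exists
  filter_upwards [eventually_ge_atTop N] with n hn
  calc eKyFan μ (g n) h ≤ eKyFan μ (g n) (g (φ k)) + eKyFan μ (g (φ k)) h := eKyFan_triangle _ _ _
    _ ≤ ε / 2 + ε / 2 := add_le_add (hN n hn _ (hNk.trans hφ.le_apply)).le hk.le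
    _ = ε := ENNReal.add_halves ε

lemma exists_edist_le_of_eKyFan_lt {f g : X → Y} {c : ℝ≥0∞} {B : Set X}
    (h : eKyFan μ f g < c) (hB : c < μ B) : ∃ x ∈ B, edist (f x) (g x) ≤ c := by
  by_contra! hc
  exact (measure_mono hc).trans (measure_le_of_eKyFan_lt h) |>.not_gt hB

end KyFan

section Closure

variable {X : Type*} [MeasurableSpace X] {μ : Measure X} {F : Set (X → ℝ)}

lemma exists_seq_tendsto_eKyFan_of_mem_closKF {g : X → ℝ} (hg : g ∈ closKF μ F) :
    ∃ v : ℕ → X → ℝ, (∀ n, v n ∈ F) ∧ Tendsto (fun n => eKyFan μ (v n) g) atTop (𝓝 0) := by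
  choose v hvF hv using fun n : ℕ => hg (n : ℝ≥0∞)⁻¹ (ENNReal.inv_pos.2 (ENNReal.natCast_ne_top n))
  exact ⟨v, hvF, tendsto_of_tendsto_of_tendsto_of_le_of_le tendsto_const_nhds
    ENNReal.tendsto_inv_nat_nhds_zero (fun _ => zero_le) fun n => (hv n).le⟩

lemma mem_closKF_of_tendsto_eKyFan {ι : Type*} {l : Filter ι} [l.NeBot] {g : ι → X → ℝ}
    {h : X → ℝ} (hg : ∀ i, g i ∈ closKF μ F) (hlim : Tendsto (fun i => eKyFan μ (g i) h) l (𝓝 0)) :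
    h ∈ closKF μ F := by
  intro ε hε
  have hε2 := ENNReal.half_pos hε.ne'
  obtain ⟨i, hi⟩ := (hlim.eventually (eventually_lt_nhds hε2)).exists
  obtain ⟨f, hfF, hf⟩ := hg i _ hε2
  refine ⟨f, hfF, ?_⟩
  calc eKyFan μ f h ≤ eKyFan μ f (g i) + eKyFan μ (g i) h := eKyFan_triangle _ _ _
    _ < ε / 2 + ε / 2 := ENNReal.add_lt_add hf hi
    _ = ε := ENNReal.add_halves ε

end Closure

section Lipschitz

variable {X Y : Type*} [PseudoMetricSpace X] [PseudoMetricSpace Y] {K : ℝ≥0}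

lemma cauchySeq_apply_of_dense {h : ℕ → X → Y} (hl : ∀ n, LipschitzWith K (h n)) {D : Set X}
    (hD : Dense D) (hcauchy : ∀ y ∈ D, CauchySeq fun n => h n y) (x : X) :
    CauchySeq fun n => h n x := by
  refine Metric.cauchySeq_iff.2 fun ε hε => ?_
  obtain ⟨δ, hδ, hKδ⟩ := exists_pos_mul_lt (by positivity : 0 < ε / 3) K
  obtain ⟨y, hyD, hxy⟩ := hD.exists_dist_lt x hδ
  obtain ⟨N, hN⟩ := Metric.cauchySeq_iff.1 (hcauchy y hyD) (ε / 3) (by positivity)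
  have hclose : ∀ n, dist (h n x) (h n y) < ε / 3 := fun n =>
    ((hl n).dist_le_mul x y).trans_lt
      ((mul_le_mul_of_nonneg_left hxy.le K.coe_nonneg).trans_lt hKδ)
  refine ⟨N, fun m hm n hn => ?_⟩
  calc dist (h m x) (h n x) ≤ dist (h m x) (h m y) + dist (h m y) (h n y) + dist (h n y) (h n x) :=
        dist_triangle4 _ _ _ _
    _ < ε / 3 + ε / 3 + ε / 3 := by
        gcongr
        exacts [hclose m, hN m hm n hn, (dist_comm _ _).trans_lt (hclose n)]
    _ = ε := by ring

lemma exists_lipschitzWith_tendsto_of_dense [CompleteSpace Y] {h : ℕ → X → Y}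
    (hl : ∀ n, LipschitzWith K (h n)) {D : Set X} (hD : Dense D)
    (hcauchy : ∀ y ∈ D, CauchySeq fun n => h n y) :
    ∃ H : X → Y, LipschitzWith K H ∧ ∀ x, Tendsto (fun n => h n x) atTop (𝓝 (H x)) := by
  choose H hH using fun x =>
    cauchySeq_tendsto_of_complete (cauchySeq_apply_of_dense hl hD hcauchy x)
  exact ⟨H, (isClosed_setOfPred_lipschitzWith K).mem_of_tendsto (tendsto_pi_nhds.2 hH)
    (Eventually.of_forall hl), hH⟩

lemma exists_subseq_tendsto_of_lipschitzWith [TopologicalSpace.SeparableSpace X] [ProperSpace Y]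
    {h : ℕ → X → Y} (hl : ∀ n, LipschitzWith K (h n)) (x₀ : X) (y₀ : Y) (C : ℝ)
    (hbd : ∀ n, dist (h n x₀) y₀ ≤ C) :
    ∃ φ : ℕ → ℕ, StrictMono φ ∧ ∃ H : X → Y, LipschitzWith K H ∧
      ∀ x, Tendsto (fun n => h (φ n) x) atTop (𝓝 (H x)) := by
  have : Nonempty X := ⟨x₀⟩
  set u := TopologicalSpace.denseSeq X
  set S : Set (ℕ → Y) := univ.pi fun k => closedBall y₀ (K * dist (u k) x₀ + C)
  have hmem : ∀ n, (fun k => h n (u k)) ∈ S := fun n => mem_univ_pi.2 fun k =>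
    calc dist (h n (u k)) y₀ ≤ dist (h n (u k)) (h n x₀) + dist (h n x₀) y₀ := dist_triangle _ _ _
      _ ≤ K * dist (u k) x₀ + C := add_le_add ((hl n).dist_le_mul _ _) (hbd n)
  obtain ⟨L, -, φ, hφ, hconv⟩ :=
    (isCompact_univ_pi fun k => isCompact_closedBall _ _).isSeqCompact hmem
  obtain ⟨H, hH, hlim⟩ := exists_lipschitzWith_tendsto_of_dense (fun n => hl (φ n))
    (TopologicalSpace.denseRange_denseSeq X)
    (by rintro _ ⟨k, rfl⟩; exact (tendsto_pi_nhds.1 hconv k).cauchySeq)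
  exact ⟨φ, hφ, H, hH, hlim⟩

variable [MeasurableSpace X] {μ : Measure X}

lemma exists_lt_measure_ball (x₀ : X) {c : ℝ≥0∞} (hc : c < μ univ) :
    ∃ R : ℝ, c < μ (ball x₀ R) := by
  have hmono : Monotone fun n : ℕ => ball x₀ (n : ℝ) := fun _ _ hmn =>
    ball_subset_ball (Nat.cast_le.2 hmn)
  have hlim := tendsto_measure_iUnion_atTop (μ := μ) hmono
  rw [iUnion_ball_nat] at hlim
  obtain ⟨n, hn⟩ := (hlim.eventually (eventually_gt_nhds hc)).exists
  exact ⟨n, hn⟩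

lemma dist_apply_le_of_eKyFan_lt {f g : X → Y} (hf : LipschitzWith K f) (hg : LipschitzWith K g)
    {c : ℝ≥0∞} (hc : c ≤ 1) {x₀ : X} {R : ℝ} (hR : c < μ (ball x₀ R))
    (h : eKyFan μ f g < c) : dist (f x₀) (g x₀) ≤ 2 * K * R + 1 := by
  obtain ⟨x, hxB, hx⟩ := exists_edist_le_of_eKyFan_lt h hR
  have hx₁ : dist (f x) (g x) ≤ 1 := by
    rw [edist_dist] at hx
    exact ENNReal.ofReal_le_one.1 (hx.trans hc)
  have hxR : K * dist x₀ x ≤ K * R :=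
    mul_le_mul_of_nonneg_left (mem_ball'.1 hxB).le K.coe_nonneg
  calc dist (f x₀) (g x₀) ≤ dist (f x₀) (f x) + dist (f x) (g x) + dist (g x) (g x₀) :=
        dist_triangle4 _ _ _ _
    _ ≤ K * dist x₀ x + 1 + K * dist x x₀ := by
        gcongr
        exacts [hf.dist_le_mul _ _, hg.dist_le_mul _ _]
    _ ≤ 2 * K * R + 1 := by rw [dist_comm x x₀]; linarith

end Lipschitz

section Compactness

variable {X : Type*} [PseudoMetricSpace X] [MeasurableSpace X] {μ : Measure X} {K : ℝ≥0}
  {F : Set (X → ℝ)}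

lemma exists_lipschitzWith_ae_eq_of_mem_closKF [μ.IsOpenPosMeasure]
    (hF : ∀ f ∈ F, LipschitzWith K f) {g : X → ℝ} (hg : g ∈ closKF μ F) :
    ∃ H : X → ℝ, LipschitzWith K H ∧ g =ᵐ[μ] H := by
  obtain ⟨v, hvF, hv⟩ := exists_seq_tendsto_eKyFan_of_mem_closKF hg
  obtain ⟨ns, -, hae⟩ := (tendsto_eKyFan_zero_iff_tendstoInMeasure.1 hv).exists_seq_tendsto_ae
  obtain ⟨H, hH, hlim⟩ := exists_lipschitzWith_tendsto_of_dense (fun n => hF _ (hvF (ns n)))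
    (μ.dense_of_ae hae) fun _ hx => hx.cauchySeq
  exact ⟨H, hH, hae.mono fun x hx => tendsto_nhds_unique hx (hlim x)⟩

lemma exists_subseq_tendsto_eKyFan_of_mem_closKF [TopologicalSpace.SeparableSpace X]
    [OpensMeasurableSpace X] [IsProbabilityMeasure μ] [μ.IsOpenPosMeasure]
    (hF : ∀ f ∈ F, LipschitzWith K f) {g : ℕ → X → ℝ} (hg : ∀ n, g n ∈ closKF μ F)
    {f : X → ℝ} (hf : f ∈ closKF μ F) {c : ℝ≥0∞} (hc : c < 1)
    (hbd : ∀ n, eKyFan μ f (g n) < c) :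
    ∃ φ : ℕ → ℕ, StrictMono φ ∧ ∃ H ∈ closKF μ F,
      Tendsto (fun n => eKyFan μ (g (φ n)) H) atTop (𝓝 0) := by
  obtain ⟨x₀⟩ := nonempty_of_isProbabilityMeasure μ
  obtain ⟨f', hf', hff'⟩ := exists_lipschitzWith_ae_eq_of_mem_closKF hF hf
  choose g' hg' hgg' using fun n => exists_lipschitzWith_ae_eq_of_mem_closKF hF (hg n)
  obtain ⟨R, hR⟩ := exists_lt_measure_ball x₀ (hc.trans_eq (measure_univ (μ := μ)).symm)
  have hbd' : ∀ n, dist (g' n x₀) (f' x₀) ≤ 2 * K * R + 1 := fun n => by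
    rw [dist_comm]
    exact dist_apply_le_of_eKyFan_lt hf' (hg' n) hc.le hR (eKyFan_congr hff' (hgg' n) ▸ hbd n)
  obtain ⟨φ, hφ, H, hH, hlim⟩ := exists_subseq_tendsto_of_lipschitzWith hg' x₀ (f' x₀) _ hbd'
  have hconv : Tendsto (fun n => eKyFan μ (g (φ n)) H) atTop (𝓝 0) := by
    refine (tendsto_eKyFan_zero_iff_tendstoInMeasure.2 <| tendstoInMeasure_of_tendsto_ae (μ := μ)
      (fun n => (hg' (φ n)).continuous.aestronglyMeasurable) (ae_of_all _ hlim)).congr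
      fun n => ?_
    exact (eKyFan_congr (hgg' (φ n)) EventuallyEq.rfl).symm
  exact ⟨φ, hφ, H, mem_closKF_of_tendsto_eKyFan (fun n => hg (φ n)) hconv, hconv⟩

end Compactness

theorem closKF_ball_compact_general {X : Type*} [MetricSpace X]
    [TopologicalSpace.SeparableSpace X] [MeasurableSpace X] [BorelSpace X]
    (μ : Measure X) [IsProbabilityMeasure μ]
    (hsupp : ∀ U : Set X, IsOpen U → U.Nonempty → 0 < μ U)
    (F : Set (X → ℝ)) (hF : ∀ f ∈ F, LipschitzWith 1 f)
    (f : X → ℝ) (hf : f ∈ closKF μ F) (r : ℝ) (hr : r ∈ Set.Ioo (0 : ℝ) 1) :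
    -- sequential compactness of the closed Ky Fan ball in the closure
    (∀ g : ℕ → X → ℝ,
      (∀ n, g n ∈ closKF μ F ∧ eKyFan μ f (g n) ≤ ENNReal.ofReal r) →
      ∃ φ : ℕ → ℕ, StrictMono φ ∧ ∃ h : X → ℝ,
        h ∈ closKF μ F ∧ eKyFan μ f h ≤ ENNReal.ofReal r ∧
        Tendsto (fun n => eKyFan μ (g (φ n)) h) atTop (𝓝 0)) ∧
    -- completeness of the closure with respect to the Ky Fan metric
    (∀ g : ℕ → X → ℝ, (∀ n, g n ∈ closKF μ F) →
      (∀ ε : ℝ≥0∞, 0 < ε → ∃ N : ℕ, ∀ m ≥ N, ∀ n ≥ N, eKyFan μ (g m) (g n) < ε) →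
      ∃ h ∈ closKF μ F, Tendsto (fun n => eKyFan μ (g n) h) atTop (𝓝 0)) := by
  have : μ.IsOpenPosMeasure := ⟨fun U hU hne => (hsupp U hU hne).ne'⟩
  refine ⟨fun g hg => ?_, fun g hg hcauchy => ?_⟩
  · obtain ⟨c, hrc, hc⟩ := exists_between (ENNReal.ofReal_lt_one.2 hr.2)
    obtain ⟨φ, hφ, H, hH, hlim⟩ := exists_subseq_tendsto_eKyFan_of_mem_closKF hF
      (fun n => (hg n).1) hf hc fun n => (hg n).2.trans_lt hrc
    exact ⟨φ, hφ, H, hH, eKyFan_le_of_tendsto (fun n => (hg (φ n)).2) hlim, hlim⟩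
  · obtain ⟨N, hN⟩ := hcauchy _ (ENNReal.half_pos one_ne_zero)
    obtain ⟨φ, hφ, H, hH, hlim⟩ := exists_subseq_tendsto_eKyFan_of_mem_closKF hF
      (fun n => hg (n + N)) (hg N) (ENNReal.half_lt_self one_ne_zero ENNReal.one_ne_top)
      fun n => hN N le_rfl (n + N) (Nat.le_add_left N n)
    exact ⟨H, hH, tendsto_eKyFan_of_cauchy_of_tendsto_subseq hcauchy
      (fun _ _ hmn => Nat.add_lt_add_right (hφ hmn) N) hlim⟩

theorem closKF_ball_compact {X : Type*} [MetricSpace X] [CompleteSpace X]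
    [TopologicalSpace.SeparableSpace X] [MeasurableSpace X] [BorelSpace X]
    (μ : Measure X) [IsProbabilityMeasure μ]
    (hsupp : ∀ U : Set X, IsOpen U → U.Nonempty → 0 < μ U)
    (F : Set (X → ℝ)) (hF : ∀ f ∈ F, LipschitzWith 1 f)
    (f : X → ℝ) (hf : f ∈ closKF μ F) (r : ℝ) (hr : r ∈ Set.Ioo (0 : ℝ) 1) :
    -- sequential compactness of the closed Ky Fan ball in the closure
    (∀ g : ℕ → X → ℝ,
      (∀ n, g n ∈ closKF μ F ∧ eKyFan μ f (g n) ≤ ENNReal.ofReal r) →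
      ∃ φ : ℕ → ℕ, StrictMono φ ∧ ∃ h : X → ℝ,
        h ∈ closKF μ F ∧ eKyFan μ f h ≤ ENNReal.ofReal r ∧
        Tendsto (fun n => eKyFan μ (g (φ n)) h) atTop (𝓝 0)) ∧
    -- completeness of the closure with respect to the Ky Fan metric
    (∀ g : ℕ → X → ℝ, (∀ n, g n ∈ closKF μ F) →
      (∀ ε : ℝ≥0∞, 0 < ε → ∃ N : ℕ, ∀ m ≥ N, ∀ n ≥ N, eKyFan μ (g m) (g n) < ε) →
      ∃ h ∈ closKF μ F, Tendsto (fun n => eKyFan μ (g n) h) atTop (𝓝 0)) :=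
  closKF_ball_compact_general μ hsupp F hF f hf r hr
end

section
/- Let (X, μ) be a Borel probability space, X a metric space with full-support μ, and fix a point x₀ ∈ X and c ≥ 0. The set of 1-Lipschitz functions f : X → ℝ with |f(x₀)| ≤ c is compact in the topology of pointwise convergence, and this topology coincides on this set with the topology of convergence in measure (Ky Fan metric). -/
open MeasureTheory Set Filter
open scoped ENNReal NNReal Topology

/-! Pointwise limits of `K`-Lipschitz functions are `K`-Lipschitz, and a bound at one point
bounds every value, so the set is a closed subset of a product of compact balls (Tychonoff).
Pointwise convergence implies a.e. convergence, hence convergence in measure, hence Ky Fan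
convergence. Conversely, if `F n x` stays `ε` away from `g x`, then by the Lipschitz bounds
`F n` and `g` stay `ε / 2` apart on a whole ball around `x`, which has positive measure because
`μ` has full support; this keeps the Ky Fan distance away from `0`. -/

theorem isCompact_setOf_lipschitzWith_apply_mem_closedBall {X Y : Type*} [PseudoMetricSpace X]
    [PseudoMetricSpace Y] [ProperSpace Y] (K : ℝ≥0) (x₀ : X) (y₀ : Y) (c : ℝ) :
    IsCompact {f : X → Y | LipschitzWith K f ∧ f x₀ ∈ Metric.closedBall y₀ c} := by
  have hbox := isCompact_univ_pi fun x => isCompact_closedBall y₀ (c + K * dist x x₀)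
  refine hbox.of_isClosed_subset ((isClosed_setOfPred_lipschitzWith K).inter
    (isClosed_le ((continuous_apply x₀).dist continuous_const) continuous_const)) ?_
  rintro f ⟨hf, hfx₀⟩ x -
  calc dist (f x) y₀ ≤ dist (f x) (f x₀) + dist (f x₀) y₀ := dist_triangle _ _ _
    _ ≤ K * dist x x₀ + c := add_le_add (hf.dist_le_mul x x₀) hfx₀
    _ = c + K * dist x x₀ := add_comm _ _

theorem LipschitzWith.edist_apply_le_edist_apply_add {α E : Type*} [PseudoEMetricSpace α]
    [PseudoEMetricSpace E] {K : ℝ≥0} {f g : α → E} (hf : LipschitzWith K f)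
    (hg : LipschitzWith K g) (x y : α) :
    edist (f x) (g x) ≤ edist (f y) (g y) + 2 * K * edist x y :=
  calc edist (f x) (g x) ≤ edist (f x) (f y) + edist (f y) (g y) + edist (g y) (g x) :=
        edist_triangle4 _ _ _ _
    _ ≤ K * edist x y + edist (f y) (g y) + K * edist x y := by
        gcongr
        · exact hf x y
        · rw [edist_comm x y]; exact hg y x
    _ = edist (f y) (g y) + 2 * K * edist x y := by ring

section KyFan

variable {α E ι : Type*} [MeasurableSpace α] [PseudoEMetricSpace E] {μ : Measure α}

theorem tendsto_eKyFan_zero_of_tendstoInMeasure {l : Filter ι} {F : ι → α → E} {g : α → E}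
    (h : TendstoInMeasure μ F l g) : Tendsto (fun i => eKyFan μ (F i) g) l (𝓝 0) := by
  refine ENNReal.tendsto_nhds_zero.2 fun ε hε => ?_
  filter_upwards [(ENNReal.tendsto_nhds_zero.1 (h ε hε)) ε hε] with i hi
  exact sInf_le ((measure_mono fun x (hx : ε < _) => hx.le).trans hi)

theorem tendsto_eKyFan_zero_of_tendsto [IsFiniteMeasure μ] {F : ℕ → α → E} {g : α → E}
    (hF : ∀ n, AEStronglyMeasurable (F n) μ) (h : Tendsto F atTop (𝓝 g)) :
    Tendsto (fun n => eKyFan μ (F n) g) atTop (𝓝 0) :=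
  tendsto_eKyFan_zero_of_tendstoInMeasure <|
    tendstoInMeasure_of_tendsto_ae hF <| ae_of_all μ (tendsto_pi_nhds.1 h)

variable [PseudoEMetricSpace α] {K : ℝ≥0}

theorem LipschitzWith.min_edist_sub_measure_ball_le_eKyFan {f g : α → E}
    (hf : LipschitzWith K f) (hg : LipschitzWith K g) (x : α) (r : ℝ≥0∞) :
    min (edist (f x) (g x) - 2 * K * r) (μ (Metric.eball x r)) ≤ eKyFan μ f g := by
  refine le_sInf fun ε (hε : μ _ ≤ ε) => ?_
  by_contra! hlt
  obtain ⟨hε_edist, hε_ball⟩ := lt_min_iff.1 hlt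
  have hball : Metric.eball x r ⊆ {y | ε < edist (f y) (g y)} := fun y hy => by
    refine hε_edist.trans_le (tsub_le_iff_right.2 ?_)
    calc edist (f x) (g x) ≤ edist (f y) (g y) + 2 * K * edist x y :=
          hf.edist_apply_le_edist_apply_add hg x y
      _ ≤ edist (f y) (g y) + 2 * K * r := by
          gcongr; exact (Metric.mem_eball'.1 hy).le
  exact (hε_ball.trans_le (measure_mono hball)).not_ge hε

theorem tendsto_of_tendsto_eKyFan_zero [μ.IsOpenPosMeasure] {l : Filter ι} {F : ι → α → E}
    {g : α → E} (hF : ∀ i, LipschitzWith K (F i)) (hg : LipschitzWith K g)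
    (h : Tendsto (fun i => eKyFan μ (F i) g) l (𝓝 0)) : Tendsto F l (𝓝 g) := by
  refine tendsto_pi_nhds.2 fun x => EMetric.tendsto_nhds.2 fun ε hε => ?_
  have hε2 : 0 < ε / 2 := ENNReal.half_pos hε.ne'
  obtain ⟨r, hr, hrK⟩ := ENNReal.exists_nnreal_pos_mul_lt
    (ENNReal.mul_ne_top (ENNReal.ofNat_ne_top (n := 2)) ENNReal.coe_ne_top) hε2.ne'
  have hball : 0 < μ (Metric.eball x r) :=
    Metric.isOpen_eball.measure_pos μ ⟨x, Metric.mem_eball_self (ENNReal.coe_pos.2 hr)⟩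
  filter_upwards [h.eventually (gt_mem_nhds (lt_min hε2 hball))] with i hi
  have hmin := ((hF i).min_edist_sub_measure_ball_le_eKyFan hg x r).trans_lt hi
  have hsub : edist (F i x) (g x) - 2 * K * r < ε / 2 := by
    by_contra! hge
    exact hmin.not_ge (min_le_min_right _ hge)
  calc edist (F i x) (g x) ≤ edist (F i x) (g x) - 2 * K * r + 2 * K * r := le_tsub_add
    _ < ε / 2 + ε / 2 := ENNReal.add_lt_add hsub (by rwa [mul_comm] at hrK)
    _ = ε := ENNReal.add_halves ε

end KyFan

theorem lipschitz_bounded_at_point_compact_general {X : Type*} [MetricSpace X]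
    [MeasurableSpace X] [BorelSpace X]
    (μ : Measure X) [IsProbabilityMeasure μ]
    (hsupp : ∀ U : Set X, IsOpen U → U.Nonempty → 0 < μ U)
    (x₀ : X) (c : ℝ) :
    -- compactness in the topology of pointwise convergence
    IsCompact {f : X → ℝ | LipschitzWith 1 f ∧ |f x₀| ≤ c} ∧
    -- on this set, pointwise convergence coincides with convergence in measure
    (∀ (F : ℕ → X → ℝ) (g : X → ℝ),
      (∀ n, LipschitzWith 1 (F n) ∧ |F n x₀| ≤ c) →
      (LipschitzWith 1 g ∧ |g x₀| ≤ c) →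
      (Tendsto F atTop (𝓝 g) ↔ Tendsto (fun n => eKyFan μ (F n) g) atTop (𝓝 0))) := by
  have : μ.IsOpenPosMeasure := ⟨fun U hU hne => (hsupp U hU hne).ne'⟩
  refine ⟨?_, fun F g hF hg => ⟨fun h => ?_, fun h => ?_⟩⟩
  · simpa only [Metric.mem_closedBall, Real.dist_0_eq_abs]
      using isCompact_setOf_lipschitzWith_apply_mem_closedBall 1 x₀ (0 : ℝ) c
  · exact tendsto_eKyFan_zero_of_tendsto (fun n => (hF n).1.continuous.aestronglyMeasurable) h
  · exact tendsto_of_tendsto_eKyFan_zero (fun n => (hF n).1) hg.1 h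

theorem lipschitz_bounded_at_point_compact {X : Type*} [MetricSpace X]
    [MeasurableSpace X] [BorelSpace X]
    (μ : Measure X) [IsProbabilityMeasure μ]
    (hsupp : ∀ U : Set X, IsOpen U → U.Nonempty → 0 < μ U)
    (x₀ : X) (c : ℝ) (hc : 0 ≤ c) :
    -- compactness in the topology of pointwise convergence
    IsCompact {f : X → ℝ | LipschitzWith 1 f ∧ |f x₀| ≤ c} ∧
    -- on this set, pointwise convergence coincides with convergence in measure
    (∀ (F : ℕ → X → ℝ) (g : X → ℝ),
      (∀ n, LipschitzWith 1 (F n) ∧ |F n x₀| ≤ c) →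
      (LipschitzWith 1 g ∧ |g x₀| ≤ c) →
      (Tendsto F atTop (𝓝 g) ↔ Tendsto (fun n => eKyFan μ (F n) g) atTop (𝓝 0))) :=
  lipschitz_bounded_at_point_compact_general μ hsupp x₀ c
end

section
/- Let X be a geometric data set and suppose the family L ⊆ Lip₁(ℝ) contains all translations. If F ⊆ F_X is L-closed (i.e., p ∘ f ∈ F for all p ∈ L, f ∈ F), then F is L-compact: for every ε > 0 there is a finite N ⊆ F such that every f ∈ F lies within Ky Fan distance ε of { p ∘ g : p ∈ L, g ∈ N }. -/
/-!
Every feature is 1-Lipschitz for `d`, and a finite measure on a Polish space is tight, so up to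
Ky Fan distance `ε / 2` only a compact set `C` matters. Translating `f ∈ F` by `-f x₀` keeps it in
`F` and makes it vanish at `x₀`; by Arzelà–Ascoli these recentred features form a totally bounded
family for uniform convergence on `C`, and translating a finite net back gives the covering.
-/

open MeasureTheory Set
open scoped ENNReal

open scoped NNReal BoundedContinuousFunction

theorem eKyFan_le_of_forall_edist_le_on {X Y : Type*} [MeasurableSpace X] [PseudoEMetricSpace Y]
    {μ : Measure X} {f g : X → Y} {C : Set X} {δ : ℝ≥0∞}
    (hfg : ∀ x ∈ C, edist (f x) (g x) ≤ δ) (hC : μ Cᶜ ≤ δ) : eKyFan μ f g ≤ δ :=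
  sInf_le <| (measure_mono fun x hx hxC => (hfg x hxC).not_gt hx).trans hC

theorem exists_finset_forall_dist_lt_on_of_lipschitzWith {X : Type*} [PseudoMetricSpace X]
    {C : Set X} (hC : IsCompact C) (x₀ : X) (k : ℝ≥0) (K : Set (X → ℝ))
    (hK : ∀ g ∈ K, LipschitzWith k g ∧ g x₀ = 0) {δ : ℝ} (hδ : 0 < δ) :
    ∃ N : Finset (X → ℝ), ↑N ⊆ K ∧ ∀ g ∈ K, ∃ h ∈ N, ∀ x ∈ C, dist (g x) (h x) < δ := by
  have := isCompact_iff_compactSpace.mp hC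
  let restrictC : K → C →ᵇ ℝ := fun g =>
    .mkOfCompact ⟨fun x => g.1 x, (hK g g.2).1.continuous.comp continuous_subtype_val⟩
  obtain ⟨R, hR⟩ := hC.isBounded.subset_closedBall x₀
  have hbound : ∀ u x, u ∈ range restrictC → u x ∈ Metric.closedBall (0 : ℝ) (k * R) := by
    rintro _ x ⟨g, rfl⟩
    calc dist (g.1 x) 0 = dist (g.1 x) (g.1 x₀) := by rw [(hK g g.2).2]
      _ ≤ k * dist (x : X) x₀ := (hK g g.2).1.dist_le_mul _ _
      _ ≤ k * R := mul_le_mul_of_nonneg_left (hR x.2) k.2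
  have hequi : Equicontinuous ((↑) : range restrictC → C → ℝ) := by
    refine (LipschitzWith.uniformEquicontinuous _ k ?_).equicontinuous
    rintro ⟨_, g, rfl⟩
    exact (hK g g.2).1.restrict C
  have hTB : TotallyBounded (restrictC '' univ) := image_univ ▸
    ((BoundedContinuousFunction.arzela_ascoli _ (isCompact_closedBall 0 (k * R)) _
      hbound hequi).totallyBounded).subset subset_closure
  obtain ⟨t, -, ht, htcov⟩ :=
    exists_subset_image_finite_and.mp (Metric.finite_approx_of_totallyBounded hTB δ hδ)
  refine ⟨(ht.image Subtype.val).toFinset, by simp, fun g hg => ?_⟩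
  obtain ⟨_, ⟨h, hht, rfl⟩, hgh⟩ :=
    mem_iUnion₂.mp (htcov (mem_image_of_mem _ (mem_univ ⟨g, hg⟩)))
  refine ⟨h, by simpa using hht, fun x hx => ?_⟩
  exact (BoundedContinuousFunction.dist_coe_le_dist ⟨x, hx⟩).trans_lt hgh

theorem lClosed_implies_lCompact_general {X : Type*}
    [MetricSpace X] [CompleteSpace X] [TopologicalSpace.SeparableSpace X]
    [MeasurableSpace X] [BorelSpace X]
    (μ : Measure X) [IsProbabilityMeasure μ]
    (FX : Set (X → ℝ))
    -- the feature family induces the (extended) metric of the carrier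
    (hd : ∀ x y : X, edist x y = ⨆ f ∈ FX, edist (f x) (f y))
    (L : Set (ℝ → ℝ))
    (htrans : ∀ c : ℝ, (fun t => t + c) ∈ L)
    (F : Set (X → ℝ)) (hF : F ⊆ FX)
    (hLclosed : ∀ p ∈ L, ∀ f ∈ F, p ∘ f ∈ F) :
    ∀ ε : ℝ, 0 < ε → ∃ N : Finset (X → ℝ), ↑N ⊆ F ∧
      ∀ f ∈ F, ∃ p ∈ L, ∃ g ∈ N, eKyFan μ f (p ∘ g) < ENNReal.ofReal ε := by
  intro ε hε
  have hFX : ∀ f ∈ FX, LipschitzWith 1 f := fun f hf x y => by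
    simpa [hd x y] using le_iSup₂ (f := fun g (_ : g ∈ FX) => edist (g x) (g y)) f hf
  obtain ⟨x₀⟩ := nonempty_of_isProbabilityMeasure μ
  obtain ⟨C, hC, hμC⟩ := isTightMeasureSet_iff_exists_isCompact_measure_compl_le.mp
    (isTightMeasureSet_singleton (μ := μ)) (ENNReal.ofReal (ε / 2)) (by simpa using hε)
  obtain ⟨N, hNF, hN⟩ := exists_finset_forall_dist_lt_on_of_lipschitzWith hC x₀ 1
    {g ∈ F | g x₀ = 0} (fun g hg => ⟨hFX g (hF hg.1), hg.2⟩) (half_pos hε)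
  refine ⟨N, fun g hg => (hNF hg).1, fun f hf => ?_⟩
  obtain ⟨g, hgN, hfg⟩ := hN ((· + -f x₀) ∘ f) ⟨hLclosed _ (htrans _) f hf, by simp⟩
  refine ⟨(· + f x₀), htrans _, g, hgN, ?_⟩
  calc eKyFan μ f ((· + f x₀) ∘ g) ≤ ENNReal.ofReal (ε / 2) := by
        refine eKyFan_le_of_forall_edist_le_on (C := C) (fun x hx => ?_) (hμC μ rfl)
        rw [edist_dist]
        refine ENNReal.ofReal_le_ofReal (le_of_eq_of_le ?_ (hfg x hx).le)
        simp only [Function.comp_apply, Real.dist_eq]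
        ring_nf
    _ < ENNReal.ofReal ε := (ENNReal.ofReal_lt_ofReal_iff hε).mpr (half_lt_self hε)

theorem lClosed_implies_lCompact {X : Type*}
    [MetricSpace X] [CompleteSpace X] [TopologicalSpace.SeparableSpace X]
    [MeasurableSpace X] [BorelSpace X]
    (μ : Measure X) [IsProbabilityMeasure μ]
    (hsupp : ∀ U : Set X, IsOpen U → U.Nonempty → 0 < μ U)
    (FX : Set (X → ℝ)) (hFXne : FX.Nonempty)
    -- the feature family induces the (extended) metric of the carrier
    (hd : ∀ x y : X, edist x y = ⨆ f ∈ FX, edist (f x) (f y))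
    (L : Set (ℝ → ℝ)) (hL : ∀ p ∈ L, LipschitzWith 1 p)
    (htrans : ∀ c : ℝ, (fun t => t + c) ∈ L)
    (F : Set (X → ℝ)) (hF : F ⊆ FX)
    (hLclosed : ∀ p ∈ L, ∀ f ∈ F, p ∘ f ∈ F) :
    ∀ ε : ℝ, 0 < ε → ∃ N : Finset (X → ℝ), ↑N ⊆ F ∧
      ∀ f ∈ F, ∃ p ∈ L, ∃ g ∈ N, eKyFan μ f (p ∘ g) < ENNReal.ofReal ε :=
  lClosed_implies_lCompact_general μ FX hd L htrans F hF hLclosed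
end
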